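/- arXiv:math/9801088 — 2 statements merged into one kernel-verified Lean document; each statement's English description precedes it below -/
import Mathlib

section
/- Let c₁, c₂ ∈ ℂ and r₁, r₂ > 0 with (c₁, r₁) ≠ (c₂, r₂). Let v₁, v₂ be points on the circle {z : |z − c₁| = r₁} and w₁, w₂ be points on the circle {z : |z − c₂| = r₂}. Suppose the four points v₁, v₂, w₁, w₂ are not all collinear, and there exists a point x lying both in the open segment joining v₁ to v₂ and in the open segment joining w₁ to w₂ (so the two chords cross transversally). Then at least one of the four endpoints lies strictly inside the other disk: v₁ ∈ ball(c₂, r₂), or v₂ ∈ ball(c₂, r₂), or w₁ ∈ ball(c₁, r₁), or w₂ ∈ ball(c₁, r₁). -/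
theorem crossing_chords_endpoint_inside
    (c₁ c₂ v₁ v₂ w₁ w₂ x : ℂ) (r₁ r₂ : ℝ)
    (hr₁ : 0 < r₁) (hr₂ : 0 < r₂)
    (hne : (c₁, r₁) ≠ (c₂, r₂))
    (hv₁ : dist v₁ c₁ = r₁) (hv₂ : dist v₂ c₁ = r₁)
    (hw₁ : dist w₁ c₂ = r₂) (hw₂ : dist w₂ c₂ = r₂)
    (hcol : ¬ Collinear ℝ ({v₁, v₂, w₁, w₂} : Set ℂ))
    (hx₁ : x ∈ openSegment ℝ v₁ v₂)
    (hx₂ : x ∈ openSegment ℝ w₁ w₂) :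
    v₁ ∈ Metric.ball c₂ r₂ ∨ v₂ ∈ Metric.ball c₂ r₂ ∨
    w₁ ∈ Metric.ball c₁ r₁ ∨ w₂ ∈ Metric.ball c₁ r₁ := by
  by_contra h
  push_neg at h
  obtain ⟨h1, h2, h3, h4⟩ := h
  rw [Metric.mem_ball, not_lt] at h1 h2 h3 h4
  have dsq : ∀ z w : ℂ, dist z w ^ 2 = (z.re - w.re)^2 + (z.im - w.im)^2 := by
    intro z w
    rw [Complex.dist_eq, Complex.sq_norm, Complex.normSq_apply, Complex.sub_re,
      Complex.sub_im]
    ring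
  set A : ℝ := c₂.re - c₁.re with hA
  set B : ℝ := c₂.im - c₁.im with hB
  set g : ℂ → ℝ := fun z =>
    2*(z.re*A + z.im*B) + (c₁.re^2 + c₁.im^2 - c₂.re^2 - c₂.im^2 - r₁^2 + r₂^2) with hgdef
  have hg : ∀ z : ℂ, g z =
      2*(z.re*A + z.im*B) + (c₁.re^2 + c₁.im^2 - c₂.re^2 - c₂.im^2 - r₁^2 + r₂^2) :=
    fun z => rfl
  have gd : ∀ z, g z = dist z c₁ ^ 2 - r₁^2 - (dist z c₂ ^ 2 - r₂^2) := by
    intro z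
    rw [dsq, dsq, hg z, hA, hB]
    ring
  clear_value g A B
  clear hgdef
  have hgv₁ : g v₁ ≤ 0 := by
    have := gd v₁; rw [hv₁] at this
    nlinarith [dist_nonneg (x := v₁) (y := c₂)]
  have hgv₂ : g v₂ ≤ 0 := by
    have := gd v₂; rw [hv₂] at this
    nlinarith [dist_nonneg (x := v₂) (y := c₂)]
  have hgw₁ : 0 ≤ g w₁ := by
    have := gd w₁; rw [hw₁] at this
    nlinarith [dist_nonneg (x := w₁) (y := c₁)]
  have hgw₂ : 0 ≤ g w₂ := by
    have := gd w₂; rw [hw₂] at this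
    nlinarith [dist_nonneg (x := w₂) (y := c₁)]
  obtain ⟨a, b, ha, hb, hab, hxe⟩ := hx₁
  obtain ⟨s, t, hs, ht, hst, hye⟩ := hx₂
  have hre : ∀ (p q : ℂ) (u v : ℝ), (u • p + v • q).re = u * p.re + v * q.re := by
    intro p q u v; simp [Complex.add_re, Complex.real_smul]
  have him : ∀ (p q : ℂ) (u v : ℝ), (u • p + v • q).im = u * p.im + v * q.im := by
    intro p q u v; simp [Complex.add_im, Complex.real_smul]
  have hgx1 : g x = a * g v₁ + b * g v₂ := by
    rw [← hxe, hg (a • v₁ + b • v₂), hg v₁, hg v₂, hre, him]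
    have hb' : b = 1 - a := by linarith
    subst hb'; ring
  have hgx2 : g x = s * g w₁ + t * g w₂ := by
    rw [← hye, hg (s • w₁ + t • w₂), hg w₁, hg w₂, hre, him]
    have ht' : t = 1 - s := by linarith
    subst ht'; ring
  have hx0 : g x = 0 := by
    have k1 := mul_nonneg hs.le hgw₁
    have k2 := mul_nonneg ht.le hgw₂
    have k3 := mul_nonpos_of_nonneg_of_nonpos ha.le hgv₁
    have k4 := mul_nonpos_of_nonneg_of_nonpos hb.le hgv₂
    have heq : a * g v₁ + b * g v₂ = s * g w₁ + t * g w₂ := by rw [← hgx1, hgx2]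
    rw [hgx1]
    linarith
  have hav : a * g v₁ = 0 := by
    have k3 := mul_nonpos_of_nonneg_of_nonpos ha.le hgv₁
    have k4 := mul_nonpos_of_nonneg_of_nonpos hb.le hgv₂
    rw [hgx1] at hx0; linarith
  have hbv : b * g v₂ = 0 := by
    have k3 := mul_nonpos_of_nonneg_of_nonpos ha.le hgv₁
    rw [hgx1] at hx0; linarith
  have hsw : s * g w₁ = 0 := by
    have k1 := mul_nonneg hs.le hgw₁
    have k2 := mul_nonneg ht.le hgw₂
    rw [hgx2] at hx0; linarith
  have htw : t * g w₂ = 0 := by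
    have k1 := mul_nonneg hs.le hgw₁
    rw [hgx2] at hx0; linarith
  have hzv₁ : g v₁ = 0 := by
    rcases mul_eq_zero.mp hav with h | h
    · exact absurd h (ne_of_gt ha)
    · exact h
  have hzv₂ : g v₂ = 0 := by
    rcases mul_eq_zero.mp hbv with h | h
    · exact absurd h (ne_of_gt hb)
    · exact h
  have hzw₁ : g w₁ = 0 := by
    rcases mul_eq_zero.mp hsw with h | h
    · exact absurd h (ne_of_gt hs)
    · exact h
  have hzw₂ : g w₂ = 0 := by
    rcases mul_eq_zero.mp htw with h | h
    · exact absurd h (ne_of_gt ht)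
    · exact h
  by_cases hc : c₁ = c₂
  · -- concentric circles: then r₁ = r₂ would be forced, contradicting hne
    have hA0 : A = 0 := by rw [hA, hc]; ring
    have hB0 : B = 0 := by rw [hB, hc]; ring
    have h0 := hzv₁
    rw [hg v₁, hA0, hB0, hc] at h0
    have hrr : (r₁ - r₂) * (r₁ + r₂) = 0 := by linear_combination -h0
    have hr : r₁ = r₂ := by
      rcases mul_eq_zero.mp hrr with h | h
      · linarith
      · linarith
    exact hne (by rw [hc, hr])
  · -- distinct centers: all four points lie on the radical line
    have hAB : 0 < A^2 + B^2 := by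
      rcases (lt_or_ge 0 (A^2 + B^2)) with h | h
      · exact h
      · exfalso
        have hA2 : A^2 = 0 := le_antisymm (by nlinarith [sq_nonneg B]) (sq_nonneg A)
        have hB2 : B^2 = 0 := le_antisymm (by nlinarith [sq_nonneg A]) (sq_nonneg B)
        have hA0 : A = 0 := by
          have := sq_eq_zero_iff.mp hA2; exact this
        have hB0 : B = 0 := by
          have := sq_eq_zero_iff.mp hB2; exact this
        apply hc
        apply Complex.ext
        · rw [hA] at hA0; linarith
        · rw [hB] at hB0; linarith
    apply hcol
    rw [collinear_iff_of_mem (Set.mem_insert v₁ _)]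
    refine ⟨Complex.I * (c₂ - c₁), ?_⟩
    have hu_re : (Complex.I * (c₂ - c₁)).re = -B := by
      simp [Complex.mul_re, Complex.sub_re, Complex.sub_im, hB]
    have hu_im : (Complex.I * (c₂ - c₁)).im = A := by
      simp [Complex.mul_im, Complex.sub_re, Complex.sub_im, hA]
    have key : ∀ p : ℂ, g p = 0 → ∃ r : ℝ, p = r • (Complex.I * (c₂ - c₁)) + v₁ := by
      intro p hp
      refine ⟨((p.im - v₁.im) * A - (p.re - v₁.re) * B) / (A^2 + B^2), ?_⟩
      have hcons : (p.re - v₁.re) * A + (p.im - v₁.im) * B = 0 := by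
        rw [hg p] at hp
        rw [hg v₁] at hzv₁
        linarith [hp, hzv₁]
      have hD : A^2 + B^2 ≠ 0 := ne_of_gt hAB
      apply Complex.ext
      · rw [Complex.add_re, Complex.real_smul, Complex.mul_re, Complex.ofReal_re,
          Complex.ofReal_im, hu_re, hu_im]
        field_simp
        linear_combination A * hcons
      · rw [Complex.add_im, Complex.real_smul, Complex.mul_im, Complex.ofReal_re,
          Complex.ofReal_im, hu_re, hu_im]
        field_simp
        linear_combination B * hcons
    intro p hp
    simp only [Set.mem_insert_iff, Set.mem_singleton_iff] at hp
    rcases hp with rfl | rfl | rfl | rfl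
    · exact key _ hzv₁
    · exact key _ hzv₂
    · exact key _ hzw₁
    · exact key _ hzw₂
end

section
/- Let k ≥ 3 be an integer and let β : Fin k → ℝ satisfy 0 < βᵢ < π for every i and Σᵢ βᵢ = 2π. Define the turning angles θᵢ = Σ_{j < i} βⱼ. Then there exist strictly positive real numbers ℓ₀, …, ℓ_{k−1} such that Σᵢ ℓᵢ·exp(θᵢ·i) = 0 (where exp(θ·i) ∈ ℂ is the unit vector of argument θ); consequently the partial sums of the vectors ℓᵢ·exp(θᵢ·i) form the vertices of a closed convex polygon in ℂ whose exterior angle at the i-th vertex is βᵢ. -/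
open Real

theorem convex_polygon_with_prescribed_exterior_angles
    (k : ℕ) (hk : 3 ≤ k) (β : Fin k → ℝ)
    (hβ : ∀ i, 0 < β i ∧ β i < π)
    (hsum : ∑ i, β i = 2 * π)
    (θ : Fin k → ℝ) (hθ : ∀ i, θ i = ∑ j ∈ Finset.Iio i, β j) :
    ∃ ℓ : Fin k → ℝ, (∀ i, 0 < ℓ i) ∧
      ∑ i, (ℓ i : ℂ) * Complex.exp ((θ i : ℂ) * Complex.I) = 0 := by
  have hk0 : 0 < k := by omega
  have : NeZero k := ⟨by omega⟩
  set b : ℕ → ℝ := fun n => if h : n < k then β ⟨n, h⟩ else 0 with hb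
  set f : ℕ → ℂ := fun n =>
    Complex.exp (((∑ m ∈ Finset.range n, b m : ℝ) : ℂ) * Complex.I) with hf
  have hbv : ∀ j : Fin k, b j.val = β j := by
    intro j; simp [hb, j.isLt]
  have hθ' : ∀ j : Fin k, θ j = ∑ m ∈ Finset.range j.val, b m := by
    intro j
    rw [hθ j, ← Nat.Iio_eq_range, ← Fin.map_valEmbedding_Iio, Finset.sum_map]
    exact Finset.sum_congr rfl fun m _ => (hbv m).symm
  set u : Fin k → ℂ := fun i => Complex.exp ((θ i : ℂ) * Complex.I) with hu
  have hufj : ∀ j : Fin k, u j = f j.val := by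
    intro j; simp [hu, hf, hθ' j]
  have hSk : (∑ m ∈ Finset.range k, b m) = 2 * π := by
    rw [← hsum, ← Fin.sum_univ_eq_sum_range]
    exact Finset.sum_congr rfl fun j _ => hbv j
  have hfk : f k = 1 := by
    rw [hf]; simp only [hSk]; push_cast
    exact Complex.exp_two_pi_mul_I
  have hf0 : f 0 = 1 := by simp [hf]
  have husucc : ∀ j : Fin k, u (j + 1) = f (j.val + 1) := by
    intro j
    have h1 : (1 : Fin k).val = 1 := by
      rw [Fin.val_one']; exact Nat.mod_eq_of_lt (by omega)
    have hv : ((j + 1 : Fin k)).val = (j.val + 1) % k := by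
      rw [Fin.val_add, h1]
    rcases Nat.lt_or_ge (j.val + 1) k with h | h
    · rw [hufj (j + 1), hv, Nat.mod_eq_of_lt h]
    · have hjk : j.val + 1 = k := by omega
      have hv0 : ((j + 1 : Fin k)).val = 0 := by rw [hv, hjk, Nat.mod_self]
      have hje : (j + 1 : Fin k) = 0 := Fin.ext hv0
      rw [hje, hjk, hfk, hufj 0]
      simpa using hf0
  refine ⟨fun i => Real.tan (β (i - 1) / 2) + Real.tan (β i / 2), ?_, ?_⟩
  · intro i
    obtain ⟨h1, h2⟩ := hβ (i - 1)
    obtain ⟨h3, h4⟩ := hβ i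
    have := pi_pos
    exact add_pos (tan_pos_of_pos_of_lt_pi_div_two (by linarith) (by linarith))
      (tan_pos_of_pos_of_lt_pi_div_two (by linarith) (by linarith))
  · have key : ∀ j : Fin k,
        (Real.tan (β j / 2) : ℂ) * (u j + u (j + 1)) =
          (-Complex.I) * (f (j.val + 1) - f j.val) := by
      intro j
      rw [husucc j, hufj j]
      have hstep : f (j.val + 1) = f j.val * Complex.exp ((β j : ℂ) * Complex.I) := by
        rw [hf]
        simp only [Finset.sum_range_succ, hbv j]
        push_cast
        rw [add_mul, Complex.exp_add]
      rw [hstep]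
      have hcos : Real.cos (β j / 2) ≠ 0 := by
        obtain ⟨h1, h2⟩ := hβ j
        exact ne_of_gt (Real.cos_pos_of_mem_Ioo ⟨by linarith [pi_pos], by linarith⟩)
      set w : ℂ := ((β j / 2 : ℝ) : ℂ) with hw
      have hcC : Complex.cos w ≠ 0 := by
        rw [hw, ← Complex.ofReal_cos]
        exact_mod_cast hcos
      have hE : ((β j : ℝ) : ℂ) = 2 * w := by rw [hw]; push_cast; ring
      have hmul : Complex.sin w * (1 + Complex.exp (2 * w * Complex.I)) =
          (-Complex.I) * (Complex.exp (2 * w * Complex.I) - 1) * Complex.cos w := by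
        rw [Complex.exp_mul_I, Complex.cos_two_mul, Complex.sin_two_mul]
        linear_combination (2 * Complex.sin w * Complex.cos w ^ 2) * Complex.I_sq +
          (2 * Complex.cos w * Complex.I) * Complex.sin_sq_add_cos_sq w
      have htan : (Real.tan (β j / 2) : ℂ) * (1 + Complex.exp ((β j : ℂ) * Complex.I)) =
          (-Complex.I) * (Complex.exp ((β j : ℂ) * Complex.I) - 1) := by
        rw [hE, Real.tan_eq_sin_div_cos, Complex.ofReal_div, Complex.ofReal_sin,
          Complex.ofReal_cos, ← hw, div_mul_eq_mul_div, div_eq_iff hcC]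
        exact hmul
      calc (Real.tan (β j / 2) : ℂ) *
            (f j.val + f j.val * Complex.exp ((β j : ℂ) * Complex.I))
          = f j.val * ((Real.tan (β j / 2) : ℂ) *
              (1 + Complex.exp ((β j : ℂ) * Complex.I))) := by ring
        _ = f j.val * ((-Complex.I) * (Complex.exp ((β j : ℂ) * Complex.I) - 1)) := by
            rw [htan]
        _ = (-Complex.I) * (f j.val * Complex.exp ((β j : ℂ) * Complex.I) - f j.val) := by
            ring
    show ∑ i, ((Real.tan (β (i - 1) / 2) + Real.tan (β i / 2) : ℝ) : ℂ) * u i = 0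
    have split : ∑ i, ((Real.tan (β (i - 1) / 2) + Real.tan (β i / 2) : ℝ) : ℂ) * u i
        = ∑ j, (Real.tan (β j / 2) : ℂ) * (u j + u (j + 1)) := by
      simp only [Complex.ofReal_add, add_mul]
      rw [Finset.sum_add_distrib]
      have e1 : ∑ i, (Real.tan (β (i - 1) / 2) : ℂ) * u i
          = ∑ j, (Real.tan (β j / 2) : ℂ) * u (j + 1) :=
        Fintype.sum_equiv (Equiv.subRight (1 : Fin k)) _ _ (fun i => by simp)
      rw [e1, ← Finset.sum_add_distrib]
      exact Finset.sum_congr rfl fun j _ => by ring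
    rw [split]
    simp only [key]
    rw [← Finset.mul_sum]
    rw [Fin.sum_univ_eq_sum_range (fun n => f (n + 1) - f n) k,
      Finset.sum_range_sub, hfk, hf0, sub_self, mul_zero]
end
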